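/- Let V be an idempotent b-space over a b-complete idempotent semifield K and let x ∈ V be an Archimedean element. Then the functional x*(y) = inf { k ∈ K : k ⊙ x ≽ y } is well-defined, b-linear (preserves ⊕, scalar multiplication, and suprema of bounded sets), and satisfies x*(y) ⊙ x ≽ y for all y ∈ V. -/

import Mathlib

/-- An idempotent commutative semigroup. -/
structure IdemSemigroup (S : Type*) where
  add : S → S → S
  add_comm : ∀ x y, add x y = add y x
  add_assoc : ∀ x y z, add (add x y) z = add x (add y z)
  add_idem : ∀ x, add x x = x

namespace IdemSemigroup
variable {S : Type*}

/-- The canonical order: x ≼ y iff x ⊕ y = y. -/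
def le (A : IdemSemigroup S) (x y : S) : Prop := A.add x y = y
def UB (A : IdemSemigroup S) (X : Set S) (b : S) : Prop := ∀ x ∈ X, A.le x b
def LB (A : IdemSemigroup S) (X : Set S) (b : S) : Prop := ∀ x ∈ X, A.le b x
def IsSup (A : IdemSemigroup S) (X : Set S) (s : S) : Prop :=
  A.UB X s ∧ ∀ b, A.UB X b → A.le s b
def IsInf (A : IdemSemigroup S) (X : Set S) (s : S) : Prop :=
  A.LB X s ∧ ∀ b, A.LB X b → A.le b s
/-- b-completeness: every subset bounded above (including ∅) has a least upper bound. -/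
def BComplete (A : IdemSemigroup S) : Prop :=
  ∀ X : Set S, (∃ b, A.UB X b) → ∃ s, A.IsSup X s
/-- Linearly ordered subset. -/
def Chain (A : IdemSemigroup S) (X : Set S) : Prop :=
  ∀ x ∈ X, ∀ y ∈ X, A.le x y ∨ A.le y x

end IdemSemigroup

/-- An idempotent semifield: idempotent semiring with all nonzero elements invertible. -/
structure IdemSemifield (K : Type*) extends IdemSemigroup K where
  mul : K → K → K
  one : K
  zero : K
  mul_assoc : ∀ x y z, mul (mul x y) z = mul x (mul y z)
  one_mul : ∀ x, mul one x = x
  mul_one : ∀ x, mul x one = x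
  zero_add : ∀ x, add zero x = x
  zero_mul : ∀ x, mul zero x = zero
  mul_zero : ∀ x, mul x zero = zero
  left_distrib : ∀ x y z, mul x (add y z) = add (mul x y) (mul x z)
  right_distrib : ∀ x y z, mul (add x y) z = add (mul x z) (mul y z)
  inv_exists : ∀ x, x ≠ zero → ∃ y, mul x y = one ∧ mul y x = one

namespace IdemSemifield
variable {K : Type*}
def BComplete (F : IdemSemifield K) : Prop := F.toIdemSemigroup.BComplete
def pow (F : IdemSemifield K) (x : K) : ℕ → K
  | 0 => F.one
  | n + 1 => F.mul x (F.pow x n)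
/-- Algebraically closed: n-th roots exist. -/
def AlgClosed (F : IdemSemifield K) : Prop :=
  ∀ x : K, ∀ n : ℕ, 0 < n → ∃ y, F.pow y n = x
end IdemSemifield

/-- An idempotent semimodule over an idempotent semifield. -/
structure IdemSemimodule {K : Type*} (F : IdemSemifield K) (V : Type*) extends
    IdemSemigroup V where
  smul : K → V → V
  zero : V
  zero_add : ∀ x, add zero x = x
  smul_smul : ∀ a b x, smul a (smul b x) = smul (F.mul a b) x
  add_smul : ∀ a b x, smul (F.add a b) x = add (smul a x) (smul b x)
  smul_add : ∀ a x y, smul a (add x y) = add (smul a x) (smul a y)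
  zero_smul : ∀ x, smul F.zero x = zero
  one_smul : ∀ x, smul F.one x = x

/-- An idempotent b-space: b-complete semimodule, scalar multiplication compatible
with bounded sups and infs of scalars. -/
structure IdemBSpace {K : Type*} (F : IdemSemifield K) (V : Type*) extends
    IdemSemimodule F V where
  bcomplete : toIdemSemigroup.BComplete
  smul_sup : ∀ (Q : Set K) (x : V) (s : K), Q.Nonempty →
    F.toIdemSemigroup.IsSup Q s →
    toIdemSemigroup.IsSup ((fun a => smul a x) '' Q) (smul s x)
  smul_inf : ∀ (Q : Set K) (x : V) (s : K), Q.Nonempty →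
    (∃ b, F.toIdemSemigroup.UB Q b) →
    F.toIdemSemigroup.IsInf Q s →
    toIdemSemigroup.IsInf ((fun a => smul a x) '' Q) (smul s x)

namespace IdemBSpace
variable {K V : Type*} {F : IdemSemifield K}

def le (B : IdemBSpace F V) (x y : V) : Prop := B.toIdemSemigroup.le x y
def IsSup (B : IdemBSpace F V) (X : Set V) (s : V) : Prop := B.toIdemSemigroup.IsSup X s
def IsInf (B : IdemBSpace F V) (X : Set V) (s : V) : Prop := B.toIdemSemigroup.IsInf X s
def Chain (B : IdemBSpace F V) (X : Set V) : Prop := B.toIdemSemigroup.Chain X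

def Subspace (B : IdemBSpace F V) (W : Set V) : Prop :=
  (∀ x ∈ W, ∀ y ∈ W, B.add x y ∈ W) ∧ (∀ (a : K), ∀ x ∈ W, B.smul a x ∈ W)

/-- wo-closed: sups of bounded linearly ordered subsets and infs of nonempty linearly
ordered subsets (taken in V) belong to the set. -/
def WOClosed (B : IdemBSpace F V) (M : Set V) : Prop :=
  ∀ X ⊆ M, B.Chain X →
    (∀ s, B.IsSup X s → s ∈ M) ∧ (∀ s, X.Nonempty → B.IsInf X s → s ∈ M)

/-- Archimedean element. -/
def ArchElem (B : IdemBSpace F V) (x : V) : Prop :=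
  ∀ y, ∃ a : K, B.le y (B.smul a x)

/-- f is the functional x*: x*(y) = inf { k | k ⊙ x ≽ y }. -/
def IsStar (B : IdemBSpace F V) (x : V) (f : V → K) : Prop :=
  ∀ y, F.toIdemSemigroup.IsInf {k | B.le y (B.smul k x)} (f y)

/-- wo-continuity of the functional f: it preserves sups and infs of bounded
linearly ordered subsets. -/
def WOContStar (B : IdemBSpace F V) (f : V → K) : Prop :=
  (∀ X : Set V, B.Chain X → ∀ s, B.IsSup X s → F.toIdemSemigroup.IsSup (f '' X) (f s)) ∧
  (∀ X : Set V, B.Chain X → X.Nonempty → ∀ s, B.IsInf X s →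
    F.toIdemSemigroup.IsInf (f '' X) (f s))

/-- wo-continuous element: its star functional is wo-continuous. -/
def WOContElem (B : IdemBSpace F V) (x : V) : Prop :=
  ∃ f, B.IsStar x f ∧ B.WOContStar f

/-- Archimedean space: contains a wo-continuous Archimedean element. -/
def ArchSpace (B : IdemBSpace F V) : Prop :=
  ∃ x, B.ArchElem x ∧ B.WOContElem x

/-- The subspace W, with the induced structure, is an Archimedean space. -/
def ArchOn (B : IdemBSpace F V) (W : Set V) : Prop :=
  ∃ x ∈ W, (∀ y ∈ W, ∃ a : K, B.le y (B.smul a x)) ∧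
    ∃ f : V → K,
      (∀ y ∈ W, F.toIdemSemigroup.IsInf {k | B.le y (B.smul k x)} (f y)) ∧
      (∀ X ⊆ W, B.Chain X → ∀ s ∈ W, B.IsSup X s →
        F.toIdemSemigroup.IsSup (f '' X) (f s)) ∧
      (∀ X ⊆ W, B.Chain X → X.Nonempty → ∀ s ∈ W, B.IsInf X s →
        F.toIdemSemigroup.IsInf (f '' X) (f s))

/-- b-linear map of the space into itself. -/
def BLinearMap (B : IdemBSpace F V) (g : V → V) : Prop :=
  (∀ x y, g (B.add x y) = B.add (g x) (g y)) ∧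
  (∀ (a : K) x, g (B.smul a x) = B.smul a (g x)) ∧
  (∀ (X : Set V) s, B.IsSup X s → B.IsSup (g '' X) (g s))

/-- b-linear functional. -/
def BLinearFun (B : IdemBSpace F V) (f : V → K) : Prop :=
  (∀ x y, f (B.add x y) = F.add (f x) (f y)) ∧
  (∀ (a : K) x, f (B.smul a x) = F.mul a (f x)) ∧
  (∀ (X : Set V) s, B.IsSup X s → F.toIdemSemigroup.IsSup (f '' X) (f s))

/-- ∧-subspace: closed under scalar multiplication and infima of nonempty subsets. -/
def WedgeSub (B : IdemBSpace F V) (W : Set V) : Prop :=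
  (∀ (a : K), ∀ x ∈ W, B.smul a x ∈ W) ∧
  (∀ X ⊆ W, X.Nonempty → ∃ s ∈ W, (∀ x ∈ X, B.le s x) ∧
    ∀ b ∈ W, (∀ x ∈ X, B.le b x) → B.le b s)

end IdemBSpace

/-- Bounded upper semicontinuous maps X → K. -/
def USCset {K : Type*} (F : IdemSemifield K) (X : Type*) [TopologicalSpace X] :
    Set (X → K) :=
  {f | (∃ b, ∀ t, F.toIdemSemigroup.le (f t) b) ∧
    ∀ b, IsClosed {t | F.toIdemSemigroup.le b (f t)}}

/- The set `{k | y ≼ k ⊙ x}` is closed under infima of its nonempty bounded subsets, because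
`k ↦ k ⊙ x` preserves them. The set itself need not be bounded, but its truncation below one of
its elements `a` is, and has the same infimum since `k ∧ a` lies in the truncation for every member
`k`. Hence `x*(y)` is attained: `y ≼ x*(y) ⊙ x`. Additivity, homogeneity and preservation of
suprema of `x*` all follow from this by comparing lower bounds. -/

namespace IdemSemigroup
variable {S : Type*} (A : IdemSemigroup S)

protected theorem le_refl (x : S) : A.le x x := A.add_idem x

protected theorem le_trans {x y z : S} (h₁ : A.le x y) (h₂ : A.le y z) : A.le x z := by
  unfold le at *
  rw [← h₂, ← A.add_assoc, h₁]

protected theorem le_antisymm {x y : S} (h₁ : A.le x y) (h₂ : A.le y x) : x = y := by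
  unfold le at *
  rw [← h₂, A.add_comm, h₁]

protected theorem le_add_left (x y : S) : A.le x (A.add x y) := by
  unfold le
  rw [← A.add_assoc, A.add_idem]

protected theorem le_add_right (x y : S) : A.le y (A.add x y) := by
  rw [A.add_comm]
  exact A.le_add_left y x

protected theorem add_le {x y z : S} (h₁ : A.le x z) (h₂ : A.le y z) : A.le (A.add x y) z := by
  unfold le at *
  rw [A.add_assoc, h₂, h₁]

theorem exists_isInf (hA : A.BComplete) {X : Set S} (hX : X.Nonempty) : ∃ m, A.IsInf X m := by
  obtain ⟨a, ha⟩ := hX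
  obtain ⟨m, hm⟩ := hA {b | A.LB X b} ⟨a, fun b hb => hb a ha⟩
  exact ⟨m, fun k hk => hm.2 k fun b hb => hb k hk, fun b hb => hm.1 b hb⟩

variable {A}

theorem IsInf.unique {X : Set S} {m m' : S} (h : A.IsInf X m) (h' : A.IsInf X m') : m = m' :=
  A.le_antisymm (h'.2 m h.1) (h.2 m' h'.1)

theorem IsInf.of_coinitial {X Y : Set S} {m : S} (h : A.IsInf X m) (hYX : Y ⊆ X)
    (hXY : ∀ x ∈ X, ∃ y ∈ Y, A.le y x) : A.IsInf Y m :=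
  ⟨fun y hy => h.1 y (hYX hy), fun b hb => h.2 b fun x hx => by
    obtain ⟨y, hy, hyx⟩ := hXY x hx
    exact A.le_trans (hb y hy) hyx⟩

end IdemSemigroup

namespace IdemSemifield
variable {K : Type*} (F : IdemSemifield K)

protected theorem mul_le_mul_left (u : K) {p q : K} (h : F.le p q) :
    F.le (F.mul u p) (F.mul u q) := by
  show F.add _ _ = _
  rw [← F.left_distrib, h]

variable {F}

theorem mul_le_iff_le_mul {a c p q : K} (hca : F.mul c a = F.one) (hac : F.mul a c = F.one) :
    F.le (F.mul a p) q ↔ F.le p (F.mul c q) := by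
  constructor
  · intro h
    simpa only [← F.mul_assoc, hca, F.one_mul] using F.mul_le_mul_left c h
  · intro h
    simpa only [← F.mul_assoc, hac, F.one_mul] using F.mul_le_mul_left a h

end IdemSemifield

namespace IdemSemimodule
variable {K V : Type*} {F : IdemSemifield K} (M : IdemSemimodule F V)

theorem smul_le_smul_right {a b : K} (h : F.le a b) (u : V) :
    M.le (M.smul a u) (M.smul b u) := by
  show M.add _ _ = _
  rw [← M.add_smul, h]

theorem smul_le_smul_left (a : K) {u v : V} (h : M.le u v) : M.le (M.smul a u) (M.smul a v) := by
  show M.add _ _ = _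
  rw [← M.smul_add, h]

variable {M}

theorem smul_le_iff_le_smul {a c : K} {u v : V} (hca : F.mul c a = F.one)
    (hac : F.mul a c = F.one) : M.le (M.smul a u) v ↔ M.le u (M.smul c v) := by
  constructor
  · intro h
    simpa only [M.smul_smul, hca, M.one_smul] using M.smul_le_smul_left c h
  · intro h
    simpa only [M.smul_smul, hac, M.one_smul] using M.smul_le_smul_left a h

end IdemSemimodule

namespace IdemBSpace
variable {K V : Type*} {F : IdemSemifield K} (B : IdemBSpace F V) {x : V}

theorem le_smul_of_isInf {y : V} {Q : Set K} {m : K} (hQ : Q.Nonempty)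
    (hQb : ∃ b, F.UB Q b) (hQy : ∀ k ∈ Q, B.le y (B.smul k x)) (hm : F.IsInf Q m) :
    B.le y (B.smul m x) :=
  (B.smul_inf Q x m hQ hQb hm).2 y (by rintro _ ⟨k, hk, rfl⟩; exact hQy k hk)

theorem le_smul_of_isInf_setOf (hF : F.BComplete) {y : V} {m : K}
    (hy : ∃ a, B.le y (B.smul a x)) (hm : F.IsInf {k | B.le y (B.smul k x)} m) :
    B.le y (B.smul m x) := by
  obtain ⟨a, ha⟩ := hy
  have hcoinitial : ∀ k, B.le y (B.smul k x) →
      ∃ n, B.le y (B.smul n x) ∧ F.le n a ∧ F.le n k := by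
    intro k hk
    have hpair : ({k, a} : Set K).Nonempty := ⟨k, .inl rfl⟩
    obtain ⟨n, hn⟩ := F.exists_isInf hF hpair
    have hbdd : ∃ b, F.UB ({k, a} : Set K) b :=
      ⟨F.add k a, by rintro _ (rfl | rfl); exacts [F.le_add_left _ _, F.le_add_right _ _]⟩
    refine ⟨n, B.le_smul_of_isInf hpair hbdd ?_ hn, hn.1 a (.inr rfl), hn.1 k (.inl rfl)⟩
    rintro _ (rfl | rfl) <;> assumption
  refine B.le_smul_of_isInf (Q := {k | B.le y (B.smul k x) ∧ F.le k a})
    ⟨a, ha, F.le_refl a⟩ ⟨a, fun k hk => hk.2⟩ (fun k hk => hk.1)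
    (hm.of_coinitial (fun k hk => hk.1) fun k hk => ?_)
  obtain ⟨n, hny, hna, hnk⟩ := hcoinitial k hk
  exact ⟨n, ⟨hny, hna⟩, hnk⟩

theorem exists_isStar (hF : F.BComplete) (hx : B.ArchElem x) : ∃ f, B.IsStar x f :=
  ⟨_, fun y => (F.exists_isInf hF (hx y)).choose_spec⟩

variable {B} {f : V → K}

theorem IsStar.le_smul (hF : F.BComplete) (hx : B.ArchElem x) (hf : B.IsStar x f) (y : V) :
    B.le y (B.smul (f y) x) :=
  B.le_smul_of_isInf_setOf hF (hx y) (hf y)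

theorem IsStar.monotone (hf : B.IsStar x f) {y z : V} (h : B.le y z) : F.le (f y) (f z) :=
  (hf z).2 (f y) fun k hk => (hf y).1 k (B.le_trans h hk)

theorem IsStar.map_add (hF : F.BComplete) (hx : B.ArchElem x) (hf : B.IsStar x f) (y z : V) :
    f (B.add y z) = F.add (f y) (f z) := by
  refine F.le_antisymm ((hf _).1 _ ?_) ?_
  · show B.le (B.add y z) (B.smul (F.add (f y) (f z)) x)
    rw [B.add_smul]
    exact B.add_le (B.le_trans (hf.le_smul hF hx y) (B.le_add_left _ _))
      (B.le_trans (hf.le_smul hF hx z) (B.le_add_right _ _))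
  · exact F.add_le (hf.monotone (B.le_add_left y z)) (hf.monotone (B.le_add_right y z))

theorem IsStar.map_zero (hf : B.IsStar x f) : f B.zero = F.zero :=
  (hf B.zero).unique ⟨fun k _ => F.zero_add k, fun _ hb => hb F.zero (B.zero_add _)⟩

theorem IsStar.map_smul (hf : B.IsStar x f) (a : K) (y : V) :
    f (B.smul a y) = F.mul a (f y) := by
  by_cases ha : a = F.zero
  · rw [ha, B.zero_smul, hf.map_zero, F.zero_mul]
  obtain ⟨c, hac, hca⟩ := F.inv_exists a ha
  refine (hf _).unique ⟨fun k hk => ?_, fun b hb => ?_⟩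
  · have hky : B.le y (B.smul (F.mul c k) x) := by
      rw [← B.smul_smul]
      exact (IdemSemimodule.smul_le_iff_le_smul hca hac).1 hk
    exact (IdemSemifield.mul_le_iff_le_mul hca hac).2 ((hf y).1 _ hky)
  · refine (IdemSemifield.mul_le_iff_le_mul hac hca).1 ((hf y).2 _ fun k hk => ?_)
    have hak : B.le (B.smul a y) (B.smul (F.mul a k) x) := by
      rw [← B.smul_smul]
      exact B.smul_le_smul_left a hk
    exact (IdemSemifield.mul_le_iff_le_mul hac hca).2 (hb _ hak)

theorem IsStar.isSup_image (hF : F.BComplete) (hx : B.ArchElem x) (hf : B.IsStar x f)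
    {X : Set V} {s : V} (hs : B.IsSup X s) : F.IsSup (f '' X) (f s) := by
  refine ⟨fun _ ⟨y, hy, hfy⟩ => hfy ▸ hf.monotone (hs.1 y hy), fun b hb => (hf s).1 b ?_⟩
  exact hs.2 _ fun y hy =>
    B.le_trans (hf.le_smul hF hx y) (B.smul_le_smul_right (hb (f y) ⟨y, hy, rfl⟩) x)

theorem IsStar.bLinearFun (hF : F.BComplete) (hx : B.ArchElem x) (hf : B.IsStar x f) :
    B.BLinearFun f :=
  ⟨hf.map_add hF hx, hf.map_smul, fun _ _ => hf.isSup_image hF hx⟩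

end IdemBSpace

/-- For an Archimedean element x of a b-space, x*(y) = inf{k : k⊙x ≽ y} is a
well-defined b-linear functional with x*(y) ⊙ x ≽ y. -/
theorem stmt7 {K V : Type*} (F : IdemSemifield K) (hF : F.BComplete)
    (B : IdemBSpace F V) (x : V) (hx : B.ArchElem x) :
    ∃ f : V → K, B.IsStar x f ∧ B.BLinearFun f ∧
      ∀ y, B.le y (B.smul (f y) x) := by
  obtain ⟨f, hf⟩ := B.exists_isStar hF hx
  exact ⟨f, hf, hf.bLinearFun hF hx, hf.le_smul hF hx⟩
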